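/- arXiv:2508.08135 — 9 statements merged into one kernel-verified Lean document; each statement's English description precedes it below -/
import Mathlib

section
/- For c ∈ ℝ^n_+ and x ∈ [0,1]^n, the piecewise linear function u ↦ u + Σ_{j=1}^n x_j·(c_j − u)^+ defined on u ≥ 0 attains its minimum over ℝ_+ at some point u = c_ℓ for ℓ ∈ {1,...,n} or at u = 0; that is, min_{u ≥ 0} (u + Σ_j x_j (c_j − u)^+) = min_{ℓ ∈ [n+1]} (c_ℓ + Σ_j x_j (c_j − c_ℓ)^+), where c_{n+1} = 0. -/
/-- The piecewise linear function `u ↦ u + Σ_j x_j (c_j − u)⁺` on `u ≥ 0` attains its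
minimum at some `u = c_ℓ` (with the extra value `c_{n+1} = 0`): the minimum over
`u ∈ [0, ∞)` equals, and is attained at, the finite minimum over `ℓ ∈ [n+1]`. -/
theorem stmt_5 (n : ℕ) (hn : 0 < n) (c : Fin n → ℝ) (hc : ∀ j, 0 ≤ c j)
    (x : Fin n → ℝ) (hx : ∀ j, 0 ≤ x j ∧ x j ≤ 1) :
    IsLeast ((fun u : ℝ => u + ∑ j, x j * max (c j - u) 0) '' Set.Ici 0)
      (Finset.univ.inf' Finset.univ_nonempty
        (fun ℓ : Fin (n + 1) =>
          (fun u : ℝ => u + ∑ j, x j * max (c j - u) 0)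
            (if h : (ℓ : ℕ) < n then c ⟨ℓ, h⟩ else 0))) := by
  set f : ℝ → ℝ := fun u => u + ∑ j, x j * max (c j - u) 0 with hf
  set p : Fin (n + 1) → ℝ := fun ℓ => if h : (ℓ : ℕ) < n then c ⟨ℓ, h⟩ else 0 with hp
  have hp0 : ∀ ℓ, 0 ≤ p ℓ := by
    intro ℓ; simp only [hp]; split
    · exact hc _
    · exact le_refl 0
  have hpval : ∀ j : Fin n, p j.castSucc = c j := by
    intro j
    simp only [hp, Fin.coe_castSucc, j.isLt, dif_pos, Fin.eta]
  have hplast : p (Fin.last n) = 0 := by simp [hp]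
  constructor
  · obtain ⟨ℓ, -, hℓ⟩ := Finset.exists_mem_eq_inf' (Finset.univ_nonempty
      (α := Fin (n + 1))) (fun ℓ => f (p ℓ))
    exact ⟨p ℓ, hp0 ℓ, hℓ.symm⟩
  · rintro y ⟨u, hu, rfl⟩
    simp only [Set.mem_Ici] at hu
    have key : ∃ ℓ : Fin (n + 1), f (p ℓ) ≤ f u := by
      set S := Finset.univ.filter (fun j => u < c j) with hS
      have hmemS : ∀ j, j ∈ S ↔ u < c j := by
        intro j; simp [hS]
      have hfval : ∀ v : ℝ, (∀ j ∉ S, c j ≤ v) → (∀ j ∈ S, v ≤ c j) →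
          f v = v + ∑ j ∈ S, x j * (c j - v) := by
        intro v h1 h2
        simp only [hf]
        congr 1
        rw [← Finset.sum_subset (Finset.subset_univ S)]
        · exact Finset.sum_congr rfl fun j hj => by
            rw [max_eq_left (by linarith [h2 j hj])]
        · intro j _ hj
          rw [max_eq_right (by linarith [h1 j hj]), mul_zero]
      have hfu : f u = u + ∑ j ∈ S, x j * (c j - u) :=
        hfval u (fun j hj => le_of_not_gt (by simpa [hmemS] using hj))
          (fun j hj => le_of_lt ((hmemS j).1 hj))
      have expand : ∀ v : ℝ, ∑ j ∈ S, x j * (c j - v)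
          = (∑ j ∈ S, x j * c j) - v * ∑ j ∈ S, x j := by
        intro v
        rw [Finset.mul_sum, ← Finset.sum_sub_distrib]
        exact Finset.sum_congr rfl fun j _ => by ring
      by_cases hs : ∑ j ∈ S, x j ≤ 1
      · -- slope nonneg: move left to the largest breakpoint ≤ u (or 0)
        have hA : ∃ ℓ : Fin (n + 1), p ℓ ≤ u ∧ ∀ j ∉ S, c j ≤ p ℓ := by
          by_cases hT : (Finset.univ.filter (fun j => c j ≤ u)).Nonempty
          · obtain ⟨j, hj, hje⟩ := Finset.exists_mem_eq_sup' hT c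
            refine ⟨j.castSucc, ?_, ?_⟩
            · rw [hpval]
              exact (Finset.mem_filter.1 hj).2
            · intro i hi
              rw [hpval, ← hje]
              exact Finset.le_sup' c (Finset.mem_filter.2
                ⟨Finset.mem_univ _, (by simpa [hmemS, not_lt] using hi)⟩)
          · refine ⟨Fin.last n, by rw [hplast]; exact hu, ?_⟩
            intro i hi
            exact absurd ⟨i, Finset.mem_filter.2 ⟨Finset.mem_univ _,
              (by simpa [hmemS, not_lt] using hi)⟩⟩ hT
        obtain ⟨ℓ, hℓu, hℓS⟩ := hA
        refine ⟨ℓ, ?_⟩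
        rw [hfu, hfval (p ℓ) hℓS
          (fun j hj => hℓu.trans (le_of_lt ((hmemS j).1 hj)))]
        rw [expand, expand]
        nlinarith [hℓu, hs]
      · -- slope negative: move right to the smallest breakpoint > u
        push_neg at hs
        have hSne : S.Nonempty := by
          rcases S.eq_empty_or_nonempty with h | h
          · rw [h, Finset.sum_empty] at hs; linarith
          · exact h
        obtain ⟨j, hj, hje⟩ := Finset.exists_mem_eq_inf' hSne c
        have hble : ∀ i ∈ S, c j ≤ c i := by
          intro i hi; rw [← hje]; exact Finset.inf'_le c hi
        have hub : u ≤ c j := le_of_lt ((hmemS j).1 hj)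
        refine ⟨j.castSucc, ?_⟩
        rw [hpval, hfu, hfval (c j)
          (fun i hi => (le_of_not_gt (by simpa [hmemS] using hi)).trans hub) hble]
        rw [expand, expand]
        nlinarith [hub, hs]
    obtain ⟨ℓ, hℓ⟩ := key
    exact le_trans (Finset.inf'_le _ (Finset.mem_univ ℓ)) hℓ
end

section
/- For c ∈ ℝ^n_+ and x ∈ [0,1]^n, the optimal value of the linear program max { Σ_j c_j z_j : 0 ≤ z_j ≤ x_j for all j, Σ_j z_j ≤ 1 } equals min_{ℓ ∈ [n+1]} ( c_ℓ + Σ_{j=1}^n (c_j − c_ℓ)^+ x_j ), where c_{n+1} := 0. -/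
open Finset

/-- The optimal value of `max { Σ_j c_j z_j : 0 ≤ z_j ≤ x_j, Σ_j z_j ≤ 1 }` equals
`min_{ℓ ∈ [n+1]} ( c_ℓ + Σ_j (c_j − c_ℓ)⁺ x_j )` with `c_{n+1} = 0`. -/
theorem stmt_6 (n : ℕ) (hn : 0 < n) (c : Fin n → ℝ) (hc : ∀ j, 0 ≤ c j)
    (x : Fin n → ℝ) (hx : ∀ j, 0 ≤ x j ∧ x j ≤ 1) :
    IsGreatest {y : ℝ | ∃ z : Fin n → ℝ,
        (∀ j, 0 ≤ z j ∧ z j ≤ x j) ∧ (∑ j, z j ≤ 1) ∧ y = ∑ j, c j * z j}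
      (Finset.univ.inf' Finset.univ_nonempty
        (fun ℓ : Fin (n + 1) =>
          (if h : (ℓ : ℕ) < n then c ⟨ℓ, h⟩ else 0) +
            ∑ j, max (c j - (if h : (ℓ : ℕ) < n then c ⟨ℓ, h⟩ else 0)) 0 * x j)) := by
  classical
  set f : Fin (n+1) → ℝ := fun ℓ =>
      (if h : (ℓ : ℕ) < n then c ⟨ℓ, h⟩ else 0) +
        ∑ j, max (c j - (if h : (ℓ : ℕ) < n then c ⟨ℓ, h⟩ else 0)) 0 * x j with hfdef
  -- Upper bound: every feasible value is at most f ℓ for each ℓ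
  have hub : ∀ z : Fin n → ℝ, (∀ j, 0 ≤ z j ∧ z j ≤ x j) → (∑ j, z j ≤ 1) →
      ∀ ℓ : Fin (n+1), ∑ j, c j * z j ≤ f ℓ := by
    intro z hz hz1 ℓ
    set a : ℝ := (if h : (ℓ : ℕ) < n then c ⟨ℓ, h⟩ else 0) with ha
    have ha0 : 0 ≤ a := by
      rw [ha]; split
      · exact hc _
      · exact le_refl 0
    have key : ∀ j, c j * z j ≤ max (c j - a) 0 * x j + a * z j := by
      intro j
      have h1 : (c j - a) * z j ≤ max (c j - a) 0 * z j :=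
        mul_le_mul_of_nonneg_right (le_max_left _ _) (hz j).1
      have h2 : max (c j - a) 0 * z j ≤ max (c j - a) 0 * x j :=
        mul_le_mul_of_nonneg_left (hz j).2 (le_max_right _ _)
      nlinarith [h1, h2]
    calc ∑ j, c j * z j ≤ ∑ j, (max (c j - a) 0 * x j + a * z j) :=
          Finset.sum_le_sum fun j _ => key j
      _ = ∑ j, max (c j - a) 0 * x j + a * ∑ j, z j := by
          rw [Finset.sum_add_distrib, Finset.mul_sum]
      _ ≤ ∑ j, max (c j - a) 0 * x j + a * 1 := by
          have := mul_le_mul_of_nonneg_left hz1 ha0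
          linarith
      _ = f ℓ := by rw [hfdef]; ring
  -- Existence: some feasible z achieves f ℓ for some ℓ
  have hex : ∃ z : Fin n → ℝ, (∀ j, 0 ≤ z j ∧ z j ≤ x j) ∧ (∑ j, z j ≤ 1) ∧
      ∃ ℓ : Fin (n+1), ∑ j, c j * z j = f ℓ := by
    by_cases hsum : ∑ j, x j ≤ 1
    · refine ⟨x, fun j => ⟨(hx j).1, le_refl _⟩, hsum, Fin.last n, ?_⟩
      have hnl : ¬ ((Fin.last n : ℕ) < n) := by simp
      rw [hfdef]
      simp only [hnl, dif_neg, not_false_iff, sub_zero, zero_add]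
      exact Finset.sum_congr rfl fun j _ => by rw [max_eq_left (hc j)]
    · -- total exceeds budget: greedy construction
      have hτ := Tuple.monotone_sort c
      set σ : Equiv.Perm (Fin n) := Fin.revPerm.trans (Tuple.sort c) with hσ
      have hanti : ∀ i i' : Fin n, i ≤ i' → c (σ i') ≤ c (σ i) := by
        intro i i' h
        have : Fin.rev i' ≤ Fin.rev i := Fin.rev_le_rev.mpr h
        have := hτ this
        simpa [hσ, Equiv.trans_apply] using this
      set Y : ℕ → ℝ := fun m => if h : m < n then x (σ ⟨m, h⟩) else 0 with hY
      set Cc : ℕ → ℝ := fun m => if h : m < n then c (σ ⟨m, h⟩) else 0 with hCc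
      have hY0 : ∀ m, 0 ≤ Y m := by
        intro m; simp only [hY]; split
        · exact (hx _).1
        · exact le_refl 0
      set S : ℕ → ℝ := fun k => ∑ m ∈ Finset.range k, Y m with hS
      have hSn : S n = ∑ j, x j := by
        simp only [hS]
        rw [← Fin.sum_univ_eq_sum_range Y n]
        rw [← Equiv.sum_comp σ x]
        exact Finset.sum_congr rfl fun i _ => by simp [hY]
      have hSn1 : 1 < S n := by rw [hSn]; linarith [not_le.mp hsum]
      set k : ℕ := Nat.findGreatest (fun k => S k ≤ 1) n with hk
      have hP0 : S 0 ≤ 1 := by rw [hS]; simp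
      have hkspec : S k ≤ 1 := by
        rw [hk]; exact Nat.findGreatest_spec (P := fun k => S k ≤ 1) (Nat.zero_le n) hP0
      have hkle : k ≤ n := by rw [hk]; exact Nat.findGreatest_le n
      have hklt : k < n := by
        rcases lt_or_eq_of_le hkle with h | h
        · exact h
        · exfalso; rw [h] at hkspec; linarith
      have hkgt : ¬ S (k+1) ≤ 1 :=
        Nat.findGreatest_is_greatest (Nat.lt_succ_self k) (Nat.succ_le_of_lt hklt)
      have hSk1 : S (k+1) = S k + Y k := by rw [hS]; exact Finset.sum_range_succ Y k
      have hSkY : 1 < S k + Y k := by rw [← hSk1]; exact not_le.mp hkgt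
      set W : ℕ → ℝ := fun m => if m < k then Y m else if m = k then 1 - S k else 0 with hW
      set z : Fin n → ℝ := fun j => W ((σ.symm j : Fin n) : ℕ) with hz
      have hwfeas : ∀ i : Fin n, 0 ≤ W (i : ℕ) ∧ W (i : ℕ) ≤ x (σ i) := by
        intro i
        simp only [hW]
        rcases lt_trichotomy (i : ℕ) k with h | h | h
        · rw [if_pos h]
          have hYi : Y (i : ℕ) = x (σ i) := by simp [hY, i.isLt]
          rw [hYi]
          exact ⟨(hx _).1, le_refl _⟩
        · rw [if_neg (by omega), if_pos h]
          constructor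
          · linarith
          · have : Y k ≤ x (σ i) := by
              simp only [hY]
              have hkn : k < n := hklt
              rw [dif_pos hkn]
              have : (⟨k, hkn⟩ : Fin n) = i := by ext; simp [h]
              rw [this]
            linarith
        · rw [if_neg (by omega), if_neg (by omega)]
          exact ⟨le_refl 0, (hx _).1⟩
      have hzfeas : ∀ j, 0 ≤ z j ∧ z j ≤ x j := by
        intro j
        have := hwfeas (σ.symm j)
        rwa [Equiv.apply_symm_apply] at this
      have hsumz : ∑ j, z j = 1 := by
        rw [hz]
        have h1 : ∑ j, W ((σ.symm j : Fin n) : ℕ) = ∑ i : Fin n, W (i : ℕ) :=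
          Equiv.sum_comp σ.symm (fun i : Fin n => W (i : ℕ))
        rw [h1, Fin.sum_univ_eq_sum_range W n]
        have h2 : ∑ m ∈ Finset.range n, W m = ∑ m ∈ Finset.range (k+1), W m := by
          rw [eq_comm]
          apply Finset.sum_subset (Finset.range_subset_range.mpr (by omega))
          intro m _ hm
          rw [Finset.mem_range, not_lt] at hm
          simp only [hW]
          rw [if_neg (by omega), if_neg (by omega)]
        rw [h2, Finset.sum_range_succ]
        have h3 : ∑ m ∈ Finset.range k, W m = S k := by
          simp only [hS]
          apply Finset.sum_congr rfl
          intro m hm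
          rw [Finset.mem_range] at hm
          simp only [hW]; rw [if_pos hm]
        rw [h3]
        have hWk : W k = 1 - S k := by simp [hW]
        rw [hWk]; ring
      refine ⟨z, hzfeas, le_of_eq hsumz, ?_⟩
      set a : ℝ := c (σ ⟨k, hklt⟩) with haa
      set ℓ' : Fin (n+1) := ⟨(σ ⟨k, hklt⟩ : ℕ), by have := (σ ⟨k, hklt⟩).isLt; omega⟩ with hℓ'
      refine ⟨ℓ', ?_⟩
      have hℓlt : ((ℓ' : ℕ)) < n := (σ ⟨k, hklt⟩).isLt
      have hfℓ : f ℓ' = a + ∑ j, max (c j - a) 0 * x j := by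
        rw [hfdef]
        dsimp only
        rw [dif_pos hℓlt]
      -- value of z
      have hval : ∑ j, c j * z j = (∑ m ∈ Finset.range k, Cc m * Y m) + a * (1 - S k) := by
        rw [hz]
        have h1 : ∑ j, c j * W ((σ.symm j : Fin n) : ℕ)
            = ∑ i : Fin n, c (σ i) * W ((i : Fin n) : ℕ) := by
          rw [← Equiv.sum_comp σ (fun j => c j * W ((σ.symm j : Fin n) : ℕ))]
          apply Finset.sum_congr rfl
          intro i _
          rw [Equiv.symm_apply_apply]
        rw [h1]
        have h2 : ∀ i : Fin n, c (σ i) * W (i : ℕ) = Cc (i : ℕ) * W (i : ℕ) := by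
          intro i
          simp [hCc, i.isLt]
        rw [Finset.sum_congr rfl (fun i _ => h2 i),
          Fin.sum_univ_eq_sum_range (fun m => Cc m * W m) n]
        have h3 : ∑ m ∈ Finset.range n, Cc m * W m = ∑ m ∈ Finset.range (k+1), Cc m * W m := by
          rw [eq_comm]
          apply Finset.sum_subset (Finset.range_subset_range.mpr (by omega))
          intro m _ hm
          rw [Finset.mem_range, not_lt] at hm
          simp only [hW]
          rw [if_neg (by omega), if_neg (by omega), mul_zero]
        rw [h3, Finset.sum_range_succ]
        congr 1
        · apply Finset.sum_congr rfl
          intro m hm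
          rw [Finset.mem_range] at hm
          simp only [hW]; rw [if_pos hm]
        · simp only [hW, hCc]
          simp [hklt, ← haa]
      -- the dual sum
      have hdual : ∑ j, max (c j - a) 0 * x j
          = ∑ m ∈ Finset.range k, (Cc m - a) * Y m := by
        rw [← Equiv.sum_comp σ (fun j => max (c j - a) 0 * x j)]
        have h2 : ∀ i : Fin n, max (c (σ i) - a) 0 * x (σ i)
            = max (Cc (i : ℕ) - a) 0 * Y (i : ℕ) := by
          intro i
          simp [hCc, hY, i.isLt]
        rw [Finset.sum_congr rfl (fun i _ => h2 i),
          Fin.sum_univ_eq_sum_range (fun m => max (Cc m - a) 0 * Y m) n]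
        rw [eq_comm]
        apply Finset.sum_subset_zero_on_sdiff (Finset.range_subset_range.mpr (by omega))
        · intro m hm
          rw [Finset.mem_sdiff, Finset.mem_range, Finset.mem_range, not_lt] at hm
          obtain ⟨hmn, hmk⟩ := hm
          have hle : Cc m ≤ a := by
            simp only [hCc]; rw [dif_pos hmn, haa]
            exact hanti ⟨k, hklt⟩ ⟨m, hmn⟩ (by simpa [Fin.le_def] using hmk)
          rw [max_eq_right (by linarith), zero_mul]
        · intro m hm
          rw [Finset.mem_range] at hm
          have hmn : m < n := by omega
          have hge : a ≤ Cc m := by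
            simp only [hCc]; rw [dif_pos hmn, haa]
            exact hanti ⟨m, hmn⟩ ⟨k, hklt⟩ (by simp [Fin.le_def]; omega)
          rw [max_eq_left (by linarith)]
      rw [hval, hfℓ, hdual]
      have hexp : ∑ m ∈ Finset.range k, (Cc m - a) * Y m
          = (∑ m ∈ Finset.range k, Cc m * Y m) - a * S k := by
        simp only [hS]
        rw [Finset.mul_sum, ← Finset.sum_sub_distrib]
        apply Finset.sum_congr rfl
        intro m _; ring
      rw [hexp]; ring
  obtain ⟨z, hfz, hsz, ℓ, hvz⟩ := hex
  have h2 : ∑ j, c j * z j ≤ Finset.univ.inf' Finset.univ_nonempty f :=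
    Finset.le_inf' _ _ fun ℓ' _ => hub z hfz hsz ℓ'
  have h1 : Finset.univ.inf' Finset.univ_nonempty f ≤ ∑ j, c j * z j := by
    rw [hvz]; exact Finset.inf'_le _ (Finset.mem_univ ℓ)
  have heq : Finset.univ.inf' Finset.univ_nonempty f = ∑ j, c j * z j :=
    le_antisymm h1 h2
  constructor
  · exact ⟨z, hfz, hsz, heq⟩
  · rintro y ⟨z', hz', hs', rfl⟩
    exact Finset.le_inf' _ _ fun ℓ' _ => hub z' hz' hs' ℓ'
end

section
/- For c ∈ ℝ^n_+, x ∈ {0,1}^n, and the function f(x) = max_{j : x_j = 1} c_j (with f(x) = 0 if x = 0), the inequality f(x) ≤ c_ℓ + Σ_{j=1}^n (c_j − c_ℓ)^+ x_j holds for every ℓ ∈ {1, ..., n+1}, where c_{n+1} = 0. -/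
/-- For binary `x` and `f(x) = max_{j : x_j = 1} c_j` (zero if `x = 0`), the inequality
`f(x) ≤ c_ℓ + Σ_j (c_j − c_ℓ)⁺ x_j` holds for every `ℓ ∈ [n+1]`, where `c_{n+1} = 0`. -/
theorem stmt_7 (n : ℕ) (hn : 0 < n) (c : Fin n → ℝ) (hc : ∀ j, 0 ≤ c j)
    (x : Fin n → ℝ) (hx : ∀ j, x j = 0 ∨ x j = 1) (ℓ : Fin (n + 1)) :
    (Finset.univ.filter (fun j => x j = 1)).fold max 0 c ≤
      (if h : (ℓ : ℕ) < n then c ⟨ℓ, h⟩ else 0) +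
        ∑ j, max (c j - (if h : (ℓ : ℕ) < n then c ⟨ℓ, h⟩ else 0)) 0 * x j := by
  set cl : ℝ := if h : (ℓ : ℕ) < n then c ⟨ℓ, h⟩ else 0 with hcl
  have hcl0 : 0 ≤ cl := by
    rw [hcl]; split
    · exact hc _
    · exact le_refl 0
  have hterm : ∀ j : Fin n, 0 ≤ max (c j - cl) 0 * x j := by
    intro j
    rcases hx j with h | h
    · simp [h]
    · rw [h, mul_one]; exact le_max_right _ _
  rw [Finset.fold_max_le]
  constructor
  · exact add_nonneg hcl0 (Finset.sum_nonneg fun j _ => hterm j)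
  · intro j hj
    simp only [Finset.mem_filter] at hj
    have h1 : c j ≤ cl + max (c j - cl) 0 * x j := by
      rw [hj.2, mul_one]
      rcases le_total (c j) cl with h | h
      · linarith [le_max_right (c j - cl) 0]
      · linarith [le_max_left (c j - cl) (0:ℝ)]
    calc c j ≤ cl + max (c j - cl) 0 * x j := h1
      _ ≤ cl + ∑ k, max (c k - cl) 0 * x k := by
          gcongr
          exact Finset.single_le_sum (fun k _ => hterm k) (Finset.mem_univ j)
end

section
/- For c ∈ ℝ^n_+ and x ∈ {0,1}^n with f(x) = max_{j : x_j = 1} c_j (f(0) = 0), there exists ℓ ∈ {1, ..., n+1} such that f(x) = c_ℓ + Σ_{j=1}^n (c_j − c_ℓ)^+ x_j, where c_{n+1} = 0; namely, the minimum over ℓ of the right-hand side is attained with equality at binary points. -/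
/-- For binary `x` and `f(x) = max_{j : x_j = 1} c_j` (zero if `x = 0`), there exists
`ℓ ∈ [n+1]` with `f(x) = c_ℓ + Σ_j (c_j − c_ℓ)⁺ x_j`, where `c_{n+1} = 0`. -/
theorem stmt_8 (n : ℕ) (hn : 0 < n) (c : Fin n → ℝ) (hc : ∀ j, 0 ≤ c j)
    (x : Fin n → ℝ) (hx : ∀ j, x j = 0 ∨ x j = 1) :
    ∃ ℓ : Fin (n + 1),
      (Finset.univ.filter (fun j => x j = 1)).fold max 0 c =
        (if h : (ℓ : ℕ) < n then c ⟨ℓ, h⟩ else 0) +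
          ∑ j, max (c j - (if h : (ℓ : ℕ) < n then c ⟨ℓ, h⟩ else 0)) 0 * x j := by
  set S := Finset.univ.filter (fun j => x j = 1) with hS
  by_cases h : ∃ j, x j = 1
  · obtain ⟨j, hj⟩ := h
    have hSne : S.Nonempty := ⟨j, by simp [hS, hj]⟩
    obtain ⟨j₀, hj₀S, hj₀max⟩ := S.exists_max_image c hSne
    refine ⟨j₀.castSucc, ?_⟩
    have hlt : ((j₀.castSucc : Fin (n+1)) : ℕ) < n := j₀.isLt
    rw [dif_pos hlt]
    have hcast : (⟨((j₀.castSucc : Fin (n+1)) : ℕ), hlt⟩ : Fin n) = j₀ := by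
      ext; simp
    rw [hcast]
    have hsum : ∑ j, max (c j - c j₀) 0 * x j = 0 := by
      apply Finset.sum_eq_zero
      intro i _
      rcases hx i with h0 | h1
      · rw [h0, mul_zero]
      · have : i ∈ S := by simp [hS, h1]
        have := hj₀max i this
        rw [max_eq_right (by linarith), zero_mul]
    rw [hsum, add_zero]
    apply le_antisymm
    · rw [Finset.fold_max_le]
      exact ⟨hc j₀, fun i hi => hj₀max i hi⟩
    · rw [Finset.le_fold_max]
      exact Or.inr ⟨j₀, hj₀S, le_refl _⟩
  · push_neg at h
    have hx0 : ∀ j, x j = 0 := fun j => (hx j).resolve_right (h j)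
    refine ⟨Fin.last n, ?_⟩
    have hnlt : ¬ ((Fin.last n : Fin (n+1)) : ℕ) < n := by simp
    rw [dif_neg hnlt]
    have hSempty : S = ∅ := by
      ext i; simp [hS, hx0 i]
    rw [hSempty]
    simp [hx0]
end

section
/- Let F : 2^{[n]} → ℝ be nondecreasing and submodular. The submodular inequalities characterize the hypograph set over binary points: a pair (η, x) with x ∈ {0,1}^n satisfies η ≤ F(S^x) (where S^x is the support of x) if and only if η ≤ F(S) + Σ_{j ∈ [n] \ S} ρ_j^F(S) x_j for every S ⊆ [n]. -/
/-- Nemhauser–Wolsey: for nondecreasing submodular `F` and binary `x` with support `S^x`,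
`η ≤ F(S^x)` iff every submodular inequality `η ≤ F(S) + Σ_{j ∉ S} ρ_j^F(S) x_j` holds. -/
theorem stmt_10 (n : ℕ) (hn : 0 < n) (F : Finset (Fin n) → ℝ)
    (hmono : ∀ S T : Finset (Fin n), S ⊆ T → F S ≤ F T)
    (hsub : ∀ S T : Finset (Fin n), ∀ j : Fin n, S ⊆ T → j ∉ T →
      F (insert j T) - F T ≤ F (insert j S) - F S)
    (η : ℝ) (x : Fin n → ℝ) (hx : ∀ j, x j = 0 ∨ x j = 1) :
    η ≤ F (Finset.univ.filter (fun j => x j = 1)) ↔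
      ∀ S : Finset (Fin n),
        η ≤ F S + ∑ j ∈ Finset.univ \ S, (F (insert j S) - F S) * x j := by
  set Sx := Finset.univ.filter (fun j => x j = 1) with hSx
  have key : ∀ A S : Finset (Fin n), Disjoint A S →
      F (S ∪ A) ≤ F S + ∑ j ∈ A, (F (insert j S) - F S) := by
    intro A
    induction A using Finset.induction_on with
    | empty => intro S _; simp
    | @insert a A ha ih =>
      intro S hd
      have haS : a ∉ S := fun h =>
        (Finset.disjoint_left.mp hd (Finset.mem_insert_self a A)) h
      have hAS : Disjoint A S := hd.mono_left (Finset.subset_insert a A)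
      have haSA : a ∉ S ∪ A := by
        simp only [Finset.mem_union]
        rintro (h | h)
        · exact haS h
        · exact ha h
      have h1 : F (insert a (S ∪ A)) - F (S ∪ A) ≤ F (insert a S) - F S :=
        hsub S (S ∪ A) a Finset.subset_union_left haSA
      have h2 : S ∪ insert a A = insert a (S ∪ A) := by
        ext y; simp [Finset.mem_insert, Finset.mem_union]
      rw [h2, Finset.sum_insert ha]
      have := ih S hAS
      linarith
  constructor
  · intro hη S
    have hsub1 : Sx \ S ⊆ Finset.univ \ S :=
      Finset.sdiff_subset_sdiff (Finset.subset_univ _) (le_refl _)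
    have hsum : ∑ j ∈ Finset.univ \ S, (F (insert j S) - F S) * x j
        = ∑ j ∈ Sx \ S, (F (insert j S) - F S) := by
      rw [← Finset.sum_subset hsub1 (fun j hj1 hj2 => ?_)]
      · refine Finset.sum_congr rfl (fun j hj => ?_)
        simp only [Finset.mem_sdiff, hSx, Finset.mem_filter] at hj
        rw [hj.1.2, mul_one]
      · rcases hx j with h0 | h1
        · rw [h0, mul_zero]
        · exfalso
          apply hj2
          simp only [Finset.mem_sdiff, hSx, Finset.mem_filter]
          exact ⟨⟨Finset.mem_univ j, h1⟩, (Finset.mem_sdiff.mp hj1).2⟩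
    rw [hsum]
    have hd : Disjoint (Sx \ S) S := Finset.sdiff_disjoint
    have hk := key (Sx \ S) S hd
    have hu : S ∪ (Sx \ S) = S ∪ Sx := by
      ext y; simp [Finset.mem_union, Finset.mem_sdiff]
    rw [hu] at hk
    have : F Sx ≤ F (S ∪ Sx) := hmono _ _ Finset.subset_union_right
    linarith
  · intro h
    have := h Sx
    have hz : ∑ j ∈ Finset.univ \ Sx, (F (insert j Sx) - F Sx) * x j = 0 := by
      apply Finset.sum_eq_zero
      intro j hj
      rcases hx j with h0 | h1
      · rw [h0, mul_zero]
      · exact absurd h1 (by simp only [Finset.mem_sdiff, Finset.mem_univ, true_and, hSx,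
          Finset.mem_filter] at hj; simpa using hj)
    rw [hz, add_zero] at this
    exact this
end

section
/- Let w_1, ..., w_m ≥ 0 and F_1, ..., F_m : 2^{[n]} → ℝ be nondecreasing submodular functions. Then for x ∈ {0,1}^n and η ∈ ℝ, the condition η ≤ Σ_i w_i F_i(S^x) holds if and only if for every choice of subsets (S_1, ..., S_m), the improved submodular inequality η ≤ Σ_i w_i ( F_i(S_i) + Σ_{j ∉ S_i} ρ_j^{F_i}(S_i) x_j ) holds. -/
lemma sub_bound (n : ℕ) (G : Finset (Fin n) → ℝ)
    (hsub : ∀ S T : Finset (Fin n), ∀ j : Fin n, S ⊆ T → j ∉ T →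
      G (insert j T) - G T ≤ G (insert j S) - G S)
    (S : Finset (Fin n)) :
    ∀ A : Finset (Fin n), Disjoint A S →
      G (S ∪ A) - G S ≤ ∑ j ∈ A, (G (insert j S) - G S) := by
  intro A
  induction A using Finset.induction_on with
  | empty => simp
  | @insert a A ha ih =>
    intro hdisj
    have hdA : Disjoint A S := (Finset.disjoint_insert_left.mp hdisj).2
    have haS : a ∉ S := (Finset.disjoint_insert_left.mp hdisj).1
    rw [Finset.sum_insert ha, Finset.union_insert]
    have haSA : a ∉ S ∪ A := by simp [haS, ha]
    have h1 : G (insert a (S ∪ A)) - G (S ∪ A) ≤ G (insert a S) - G S :=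
      hsub S (S ∪ A) a Finset.subset_union_left haSA
    have h2 := ih hdA
    linarith

/-- For nonnegative weights and nondecreasing submodular `F_i`, binary `x`, and `η`:
`η ≤ Σ_i w_i F_i(S^x)` iff every improved submodular inequality
`η ≤ Σ_i w_i (F_i(S_i) + Σ_{j ∉ S_i} ρ_j^{F_i}(S_i) x_j)` holds. -/
theorem stmt_11 (n m : ℕ) (hn : 0 < n) (hm : 0 < m) (w : Fin m → ℝ)
    (hw : ∀ i, 0 ≤ w i) (F : Fin m → Finset (Fin n) → ℝ)
    (hmono : ∀ i, ∀ S T : Finset (Fin n), S ⊆ T → F i S ≤ F i T)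
    (hsub : ∀ i, ∀ S T : Finset (Fin n), ∀ j : Fin n, S ⊆ T → j ∉ T →
      F i (insert j T) - F i T ≤ F i (insert j S) - F i S)
    (η : ℝ) (x : Fin n → ℝ) (hx : ∀ j, x j = 0 ∨ x j = 1) :
    η ≤ ∑ i, w i * F i (Finset.univ.filter (fun j => x j = 1)) ↔
      ∀ Svec : Fin m → Finset (Fin n),
        η ≤ ∑ i, w i * (F i (Svec i) +
          ∑ j ∈ Finset.univ \ Svec i, (F i (insert j (Svec i)) - F i (Svec i)) * x j) := by
  set Sx := Finset.univ.filter (fun j => x j = 1) with hSx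
  constructor
  · intro hη Svec
    refine hη.trans (Finset.sum_le_sum fun i _ => ?_)
    refine mul_le_mul_of_nonneg_left ?_ (hw i)
    set S := Svec i
    -- F i Sx ≤ F i S + Σ
    have key : F i Sx - F i S ≤ ∑ j ∈ Finset.univ \ S, (F i (insert j S) - F i S) * x j := by
      have hd : Disjoint (Sx \ S) S := Finset.sdiff_disjoint
      have h1 : F i (S ∪ (Sx \ S)) - F i S ≤ ∑ j ∈ Sx \ S, (F i (insert j S) - F i S) :=
        sub_bound n (F i) (hsub i) S (Sx \ S) hd
      have h2 : F i Sx ≤ F i (S ∪ (Sx \ S)) :=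
        hmono i _ _ (fun j hj => by
          by_cases hjS : j ∈ S
          · exact Finset.mem_union_left _ hjS
          · exact Finset.mem_union_right _ (Finset.mem_sdiff.mpr ⟨hj, hjS⟩))
      have h3 : ∑ j ∈ Sx \ S, (F i (insert j S) - F i S)
          ≤ ∑ j ∈ Finset.univ \ S, (F i (insert j S) - F i S) * x j := by
        have hss : Sx \ S ⊆ Finset.univ \ S := by
          intro j hj; simp [Finset.mem_sdiff] at hj ⊢; exact hj.2
        calc ∑ j ∈ Sx \ S, (F i (insert j S) - F i S)
            = ∑ j ∈ Sx \ S, (F i (insert j S) - F i S) * x j := by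
              refine Finset.sum_congr rfl fun j hj => ?_
              have : x j = 1 := by
                simp [hSx, Finset.mem_sdiff, Finset.mem_filter] at hj; exact hj.1
              rw [this, mul_one]
          _ ≤ ∑ j ∈ Finset.univ \ S, (F i (insert j S) - F i S) * x j := by
              refine Finset.sum_le_sum_of_subset_of_nonneg hss fun j _ hj => ?_
              have hρ : 0 ≤ F i (insert j S) - F i S :=
                sub_nonneg.mpr (hmono i _ _ (Finset.subset_insert j S))
              have hxj : 0 ≤ x j := by rcases hx j with h | h <;> simp [h]
              positivity
      linarith
    linarith
  · intro h
    refine (h fun _ => Sx).trans (le_of_eq ?_)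
    refine Finset.sum_congr rfl fun i _ => ?_
    have : ∑ j ∈ Finset.univ \ Sx, (F i (insert j Sx) - F i Sx) * x j = 0 := by
      refine Finset.sum_eq_zero fun j hj => ?_
      have : x j = 0 := by
        simp [hSx, Finset.mem_sdiff, Finset.mem_filter] at hj
        rcases hx j with h0 | h1
        · exact h0
        · exact absurd h1 hj
      rw [this, mul_zero]
    rw [this, add_zero]
end

section
/- Projection identity for the extended formulation: for c ∈ ℝ_+^{m×n}, weights w ∈ ℝ_+^m, and the sets U = {(η, x) ∈ ℝ × {0,1}^n : η ≤ Σ_i w_i max_j c_{ij} x_j} and W = {(η, x, z) ∈ ℝ × {0,1}^n × {0,1}^{mn} : z_{ij} ≤ x_j ∀i,j; Σ_j z_{ij} ≤ 1 ∀i; η ≤ Σ_i w_i Σ_j c_{ij} z_{ij}}, the projection of W onto the (η, x)-coordinates equals U. -/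
/-- Projection identity for the extended formulation: the projection onto `(η, x)` of
`W = {(η, x, z) binary : z_{ij} ≤ x_j, Σ_j z_{ij} ≤ 1, η ≤ Σ_i w_i Σ_j c_{ij} z_{ij}}`
equals `U = {(η, x) binary : η ≤ Σ_i w_i max_j c_{ij} x_j}` (with `max = 0` if `x = 0`). -/
theorem stmt_14 (m n : ℕ) (hm : 0 < m) (hn : 0 < n) (w : Fin m → ℝ)
    (hw : ∀ i, 0 ≤ w i) (c : Fin m → Fin n → ℝ) (hc : ∀ i j, 0 ≤ c i j) :
    {p : ℝ × (Fin n → ℝ) | ∃ z : Fin m → Fin n → ℝ,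
        (∀ j, p.2 j = 0 ∨ p.2 j = 1) ∧ (∀ i j, z i j = 0 ∨ z i j = 1) ∧
        (∀ i j, z i j ≤ p.2 j) ∧ (∀ i, ∑ j, z i j ≤ 1) ∧
        p.1 ≤ ∑ i, w i * ∑ j, c i j * z i j} =
      {p : ℝ × (Fin n → ℝ) | (∀ j, p.2 j = 0 ∨ p.2 j = 1) ∧
        p.1 ≤ ∑ i, w i * Finset.univ.fold max 0 (fun j => c i j * p.2 j)} := by
  ext ⟨η, x⟩
  simp only [Set.mem_setOf_eq]
  constructor
  · rintro ⟨z, hx, hz01, hzx, hzsum, hη⟩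
    refine ⟨hx, hη.trans ?_⟩
    apply Finset.sum_le_sum
    intro i _
    apply mul_le_mul_of_nonneg_left _ (hw i)
    have hM0 : (0:ℝ) ≤ Finset.univ.fold max 0 (fun j => c i j * x j) :=
      (Finset.le_fold_max _).2 (Or.inl le_rfl)
    calc ∑ j, c i j * z i j
        ≤ ∑ j, (Finset.univ.fold max 0 (fun j => c i j * x j)) * z i j := by
          apply Finset.sum_le_sum
          intro j _
          rcases hz01 i j with h0 | h1
          · simp [h0]
          · rw [h1, mul_one, mul_one]
            have hxj : x j = 1 := by
              rcases hx j with h | h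
              · exfalso; have := hzx i j; rw [h1, h] at this; linarith
              · exact h
            have : c i j * x j ≤ Finset.univ.fold max 0 (fun j => c i j * x j) :=
              (Finset.le_fold_max _).2 (Or.inr ⟨j, Finset.mem_univ j, le_rfl⟩)
            rwa [hxj, mul_one] at this
      _ = (Finset.univ.fold max 0 (fun j => c i j * x j)) * ∑ j, z i j := by
            rw [Finset.mul_sum]
      _ ≤ (Finset.univ.fold max 0 (fun j => c i j * x j)) * 1 :=
            mul_le_mul_of_nonneg_left (hzsum i) hM0
      _ = _ := mul_one _
  · rintro ⟨hx, hη⟩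
    have hx0 : ∀ j, (0:ℝ) ≤ x j := fun j => by rcases hx j with h | h <;> simp [h]
    -- choose argmax for each i
    have hex : ∀ i : Fin m, ∃ j : Fin n, ∀ k : Fin n, c i k * x k ≤ c i j * x j := by
      intro i
      obtain ⟨j, _, hj⟩ := Finset.exists_max_image Finset.univ (fun j => c i j * x j)
        ⟨⟨0, hn⟩, Finset.mem_univ _⟩
      exact ⟨j, fun k => hj k (Finset.mem_univ k)⟩
    choose J hJ using hex
    refine ⟨fun i j => if j = J i then x j else 0, hx, ?_, ?_, ?_, ?_⟩
    · intro i j; dsimp only; split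
      · exact hx j
      · exact Or.inl rfl
    · intro i j; dsimp only; split
      · exact le_rfl
      · exact hx0 j
    · intro i
      rw [Finset.sum_ite_eq' Finset.univ (J i) x]
      simp only [Finset.mem_univ, if_true]
      rcases hx (J i) with h | h <;> simp [h]
    · refine hη.trans (Finset.sum_le_sum fun i _ => ?_)
      apply mul_le_mul_of_nonneg_left _ (hw i)
      have : ∑ j, c i j * (if j = J i then x j else 0) = c i (J i) * x (J i) := by
        rw [Finset.sum_congr rfl (fun j _ => by
          rw [mul_ite, mul_zero]), Finset.sum_ite_eq' Finset.univ (J i)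
            (fun j => c i j * x j)]
        simp
      rw [this]
      refine (Finset.fold_max_le _).2 ⟨mul_nonneg (hc i (J i)) (hx0 (J i)), fun k _ => hJ i k⟩
end

section
/- For x* ∈ {0,1}^n with some coordinate equal to 1, and letting c_i = max_{j} v_{ij} x*_j > 0 and a_{ik} = c_i/(c_i + v_{ik}), for every y ∈ {0,1}^n with at least one y_k = 1 the leader's probability for customer i satisfies (max_j v_{ij} x*_j)/(max_j v_{ij} x*_j + max_k v_{ik} y_k) = min_{k : y_k = 1} a_{ik}, hence g(x*, y) = Σ_i w_i min_{k : y_k = 1} a_{ik}. -/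
/-- For binary `x*` with nonempty support, letting `c_i = max_j v_{ij} x*_j` and
`a_{ik} = c_i / (c_i + v_{ik})`, for binary `y` with nonempty support the leader's
probability for customer `i` equals `min_{k : y_k = 1} a_{ik}`, and hence
`g(x*, y) = Σ_i w_i min_{k : y_k = 1} a_{ik}`. -/
theorem stmt_18 (m n : ℕ) (hm : 0 < m) (hn : 0 < n) (w : Fin m → ℝ)
    (hw : ∀ i, 0 ≤ w i) (v : Fin m → Fin n → ℝ) (hv : ∀ i j, 0 < v i j)
    (x y : Fin n → ℝ) (hx : ∀ j, x j = 0 ∨ x j = 1) (hy : ∀ j, y j = 0 ∨ y j = 1)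
    (hxne : ∃ j, x j = 1)
    (hyne : (Finset.univ.filter (fun k => y k = 1)).Nonempty) :
    let M : (Fin n → ℝ) → Fin m → ℝ := fun t i =>
      Finset.univ.fold max 0 (fun j => v i j * t j)
    (∀ i, M x i / (M x i + M y i) =
        (Finset.univ.filter (fun k => y k = 1)).inf' hyne
          (fun k => M x i / (M x i + v i k))) ∧
      (∑ i, w i * (M x i / (M x i + M y i))) =
        ∑ i, w i * ((Finset.univ.filter (fun k => y k = 1)).inf' hyne
          (fun k => M x i / (M x i + v i k))) := by
  intro M
  set S := Finset.univ.filter (fun k => y k = 1) with hS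
  have hmemS : ∀ k, k ∈ S ↔ y k = 1 := by
    intro k; simp [hS]
  have key : ∀ i, M x i / (M x i + M y i) =
      S.inf' hyne (fun k => M x i / (M x i + v i k)) := by
    intro i
    -- positivity of M x i
    obtain ⟨j0, hj0⟩ := hxne
    have hcpos : 0 < M x i := by
      have hle : v i j0 * x j0 ≤ M x i := by
        apply (Finset.le_fold_max _).2
        exact Or.inr ⟨j0, Finset.mem_univ j0, le_rfl⟩
      have : 0 < v i j0 * x j0 := by rw [hj0, mul_one]; exact hv i j0
      linarith
    -- M y i equals sup' over S of v i
    have hMy : M y i = S.sup' hyne (fun k => v i k) := by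
      apply le_antisymm
      · apply (Finset.fold_max_le _).2
        constructor
        · obtain ⟨k0, hk0⟩ := hyne
          exact le_trans (le_of_lt (hv i k0)) (Finset.le_sup' _ hk0)
        · intro j _
          rcases hy j with h0 | h1
          · rw [h0, mul_zero]
            obtain ⟨k0, hk0⟩ := hyne
            exact le_trans (le_of_lt (hv i k0)) (Finset.le_sup' _ hk0)
          · rw [h1, mul_one]
            exact Finset.le_sup' _ ((hmemS j).2 h1)
      · apply Finset.sup'_le
        intro k hk
        have : v i k = v i k * y k := by rw [(hmemS k).1 hk, mul_one]
        rw [this]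
        exact (Finset.le_fold_max _).2 (Or.inr ⟨k, Finset.mem_univ k, le_rfl⟩)
    obtain ⟨k1, hk1, hk1eq⟩ := Finset.exists_mem_eq_sup' hyne (fun k => v i k)
    apply le_antisymm
    · apply Finset.le_inf'
      intro k hk
      have hvk : v i k ≤ M y i := by
        rw [hMy]; exact Finset.le_sup' _ hk
      apply div_le_div_of_nonneg_left hcpos.le (by have := hv i k; linarith)
      linarith
    · have h1 : S.inf' hyne (fun k => M x i / (M x i + v i k)) ≤
          M x i / (M x i + v i k1) := Finset.inf'_le _ hk1
      rw [hMy, hk1eq] at *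
      exact h1
  refine ⟨key, ?_⟩
  apply Finset.sum_congr rfl
  intro i _
  rw [key i]
end

section
/- For z* ∈ [0,1]^{m×n} and y ∈ {0,1}^n with nonempty support, Σ_{j} v_{ij}/(v_{ij} + max_{k} v_{ik} y_k) · z*_{ij} = min_{k : y_k = 1} Σ_j (z*_{ij} v_{ij})/(v_{ij} + v_{ik}); that is, the inner sum weighted by c^y coefficients equals the minimum over the follower's open facilities of the facility-specific sums d_{ik} = Σ_j z*_{ij} v_{ij}/(v_{ij} + v_{ik}). -/
/-- For `z* ∈ [0,1]^{m×n}` and binary `y` with nonempty support,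
`Σ_j (v_{ij} / (v_{ij} + max_k v_{ik} y_k)) z*_{ij}
  = min_{k : y_k = 1} Σ_j z*_{ij} v_{ij} / (v_{ij} + v_{ik})`. -/
theorem stmt_19 (m n : ℕ) (hm : 0 < m) (hn : 0 < n)
    (v : Fin m → Fin n → ℝ) (hv : ∀ i j, 0 < v i j)
    (z : Fin m → Fin n → ℝ) (hz : ∀ i j, 0 ≤ z i j ∧ z i j ≤ 1)
    (y : Fin n → ℝ) (hy : ∀ k, y k = 0 ∨ y k = 1)
    (hyne : (Finset.univ.filter (fun k => y k = 1)).Nonempty) (i : Fin m) :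
    ∑ j, v i j / (v i j + Finset.univ.fold max 0 (fun k => v i k * y k)) * z i j =
      (Finset.univ.filter (fun k => y k = 1)).inf' hyne
        (fun k => ∑ j, z i j * v i j / (v i j + v i k)) := by
  set S := Finset.univ.filter (fun k => y k = 1) with hS
  obtain ⟨k0, hk0S, hk0max⟩ := S.exists_max_image (fun k => v i k) hyne
  have hyk0 : y k0 = 1 := (Finset.mem_filter.mp hk0S).2
  have hM : Finset.univ.fold max 0 (fun k => v i k * y k) = v i k0 := by
    apply le_antisymm
    · rw [Finset.fold_max_le]
      refine ⟨(hv i k0).le, fun x _ => ?_⟩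
      rcases hy x with h | h
      · simp [h, (hv i k0).le]
      · simpa [h] using hk0max x (Finset.mem_filter.mpr ⟨Finset.mem_univ x, h⟩)
    · rw [Finset.le_fold_max]
      exact Or.inr ⟨k0, Finset.mem_univ k0, by simp [hyk0]⟩
  rw [hM]
  have heq : ∑ j, v i j / (v i j + v i k0) * z i j
      = ∑ j, z i j * v i j / (v i j + v i k0) := by
    apply Finset.sum_congr rfl; intro j _; ring
  rw [heq]
  apply le_antisymm
  · apply Finset.le_inf'
    intro k hkS
    apply Finset.sum_le_sum
    intro j _
    have hvk : v i k ≤ v i k0 := hk0max k hkS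
    have h1 : (0:ℝ) < v i j + v i k := add_pos (hv i j) (hv i k)
    gcongr
    · exact mul_nonneg (hz i j).1 (hv i j).le
  · exact Finset.inf'_le _ hk0S
end
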